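/- Let σ > 0, and let s, s', w', w, t, t' be six points of ℝ² in convex position, appearing in this counterclockwise order on their convex hull. Then it is impossible that simultaneously dist(w', [s,t]) ≤ σ, dist(w, [s,t]) > σ, dist(w, [s',t']) ≤ σ, and dist(w', [s',t']) > σ, where [a,b] denotes the closed line segment from a to b and dist denotes Euclidean distance from a point to a set. -/

import Mathlib

/-!
STATEMENT 13: Let σ > 0, and let s, s', w', w, t, t' be six points of ℝ² in
convex position, appearing in this counterclockwise order on their convex hull.
Then it is impossible that simultaneously dist(w', [s,t]) ≤ σ,
dist(w, [s,t]) > σ, dist(w, [s',t']) ≤ σ, and dist(w', [s',t']) > σ.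

The hypothesis "in convex position, in this counterclockwise order" is expressed
by requiring every triple of the six points, taken in the listed order, to be
positively oriented.
-/

noncomputable section

abbrev Pt := EuclideanSpace ℝ (Fin 2)

/-- `ccw3 a b c` : the triple `(a, b, c)` is positively (counterclockwise) oriented. -/
def ccw3 (a b c : Pt) : Prop :=
  0 < (b 0 - a 0) * (c 1 - a 1) - (b 1 - a 1) * (c 0 - a 0)

/-!
Let `a` be a point of `[s,t]` nearest to `w'` and `b` a point of `[s',t']` nearest to `w`.
The diagonals `[s,t]` and `[s',t']` of the convex hexagon cross at a point `X`. If `b` lies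
on `[X,t']`, then `[w,b]` meets `[s,t]`, so `dist(w, [s,t]) ≤ |wb| ≤ σ`; symmetrically, if `a`
lies on `[s,X]`, then `[w',a]` meets `[s',t']`. In the remaining case `[w,b]` and `[w',a]`
cross at some `z`, and the triangle inequality through `z` gives
`|wa| + |w'b| ≤ |wb| + |w'a| ≤ 2σ`, so one of `w, w'` is within `σ` of the other segment.
All the crossings are detected by signs of orientation determinants.
-/

section Segment

variable {E : Type*}

theorem mem_segment_or_mem_segment [AddCommGroup E] [Module ℝ E] {x y X z : E}
    (hX : X ∈ segment ℝ x y) (hz : z ∈ segment ℝ x y) :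
    z ∈ segment ℝ x X ∨ z ∈ segment ℝ X y := by
  simp only [mem_segment_iff_wbtw] at *
  have hray : SameRay ℝ (X -ᵥ x) (z -ᵥ x) := by
    rcases eq_or_ne x y with rfl | hxy
    · rw [wbtw_self_iff] at hX
      simp [hX]
    · exact hX.sameRay_vsub_left.trans hz.sameRay_vsub_left.symm
        fun h => absurd (vsub_eq_zero_iff_eq.1 h).symm hxy
  rcases wbtw_total_of_sameRay_vsub_left hray with h | h
  · exact Or.inr (hz.trans_left_right h)
  · exact Or.inl h

variable [SeminormedAddCommGroup E] [NormedSpace ℝ E]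

theorem isCompact_segment (x y : E) : IsCompact (segment ℝ x y) := by
  rw [segment_eq_image]
  exact isCompact_Icc.image (by fun_prop)

theorem dist_le_dist_of_mem_segment {x y z : E} (h : z ∈ segment ℝ x y) :
    dist x z ≤ dist x y := by
  linarith [dist_add_dist_of_mem_segment h, dist_nonneg (x := z) (y := y)]

theorem dist_add_dist_le_of_mem_segment_of_mem_segment {x y x' y' z : E}
    (h : z ∈ segment ℝ x y) (h' : z ∈ segment ℝ x' y') :
    dist x y' + dist x' y ≤ dist x y + dist x' y' := by
  linarith [dist_add_dist_of_mem_segment h, dist_add_dist_of_mem_segment h',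
    dist_triangle x z y', dist_triangle x' z y]

end Segment

section Cross

def cross (a b c : Pt) : ℝ :=
  (b 0 - a 0) * (c 1 - a 1) - (b 1 - a 1) * (c 0 - a 0)

variable {a b c p q r u x y z : Pt}

theorem ccw3_iff_cross_pos : ccw3 a b c ↔ 0 < cross a b c := Iff.rfl

theorem cross_rotate (a b c : Pt) : cross b c a = cross a b c := by
  unfold cross; ring

theorem cross_swap (a b c : Pt) : cross a c b = -cross a b c := by
  unfold cross; ring

theorem cross_self_left (a b : Pt) : cross a b a = 0 := by
  unfold cross; ring

theorem cross_self_right (a b : Pt) : cross a b b = 0 := by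
  unfold cross; ring

theorem cross_smul_add_smul {s t : ℝ} (hst : s + t = 1) (a b x y : Pt) :
    cross a b (s • x + t • y) = s * cross a b x + t * cross a b y := by
  obtain rfl : t = 1 - s := by linarith
  simp only [cross, PiLp.add_apply, PiLp.smul_apply, smul_eq_mul]
  ring

theorem cross_mem_of_mem_segment {S : Set ℝ} (hS : Convex ℝ S) (hx : cross a b x ∈ S)
    (hy : cross a b y ∈ S) (hz : z ∈ segment ℝ x y) : cross a b z ∈ S := by
  obtain ⟨s, t, hs, ht, hst, rfl⟩ := hz
  rw [cross_smul_add_smul hst]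
  exact hS hx hy hs ht hst

theorem cross_nonneg_of_mem_segment (hx : 0 ≤ cross a b x) (hy : 0 ≤ cross a b y)
    (hz : z ∈ segment ℝ x y) : 0 ≤ cross a b z :=
  cross_mem_of_mem_segment (convex_Ici 0) hx hy hz

theorem cross_nonpos_of_mem_segment (hx : cross a b x ≤ 0) (hy : cross a b y ≤ 0)
    (hz : z ∈ segment ℝ x y) : cross a b z ≤ 0 :=
  cross_mem_of_mem_segment (convex_Iic 0) hx hy hz

theorem cross_neg_of_mem_segment (hx : cross a b x < 0) (hy : cross a b y < 0)
    (hz : z ∈ segment ℝ x y) : cross a b z < 0 :=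
  cross_mem_of_mem_segment (convex_Iio 0) hx hy hz

theorem cross_eq_zero_of_mem_segment (hz : z ∈ segment ℝ a b) : cross a b z = 0 :=
  cross_mem_of_mem_segment (convex_singleton 0) (cross_self_left a b) (cross_self_right a b) hz

theorem cross_nonneg_of_mem_segment_of_mem_segment {a₁ a₂ b₁ b₂ : Pt}
    (h₁₁ : 0 ≤ cross p a₁ b₁) (h₁₂ : 0 ≤ cross p a₁ b₂) (h₂₁ : 0 ≤ cross p a₂ b₁)
    (h₂₂ : 0 ≤ cross p a₂ b₂) (ha : a ∈ segment ℝ a₁ a₂) (hb : b ∈ segment ℝ b₁ b₂) :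
    0 ≤ cross p a b := by
  rw [cross_rotate b p a]
  refine cross_nonneg_of_mem_segment ?_ ?_ ha <;> rw [← cross_rotate]
  exacts [cross_nonneg_of_mem_segment h₁₁ h₁₂ hb, cross_nonneg_of_mem_segment h₂₁ h₂₂ hb]

theorem smul_sub_smul_eq_cross (p q r u : Pt) :
    cross r u q • p - cross r u p • q = cross p q r • u - cross p q u • r := by
  ext i
  fin_cases i <;> simp [cross] <;> ring

/-- `[p,q]` and `[r,u]` meet when `p`, `q` are on opposite sides of the line `ru` and
`r`, `u` are on opposite sides of the line `pq`. -/
theorem segment_inter_nonempty_of_cross (hp : cross r u p < 0) (hq : 0 ≤ cross r u q)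
    (hr : 0 ≤ cross p q r) (hu : cross p q u ≤ 0) :
    (segment ℝ p q ∩ segment ℝ r u).Nonempty := by
  have hpq : 0 < cross r u q - cross r u p := by linarith
  have hru : cross p q r - cross p q u = cross r u q - cross r u p := by
    unfold cross; ring
  set d := cross r u q - cross r u p
  refine ⟨d⁻¹ • (cross r u q • p - cross r u p • q), ?_, ?_⟩
  · refine ⟨cross r u q / d, -cross r u p / d, by positivity, div_nonneg (by linarith) hpq.le,
      by field_simp; ring, by module⟩
  · refine ⟨-cross p q u / d, cross p q r / d, div_nonneg (by linarith) hpq.le,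
      div_nonneg hr hpq.le, by field_simp; linarith, ?_⟩
    rw [smul_sub_smul_eq_cross]
    module

end Cross

section Polygon

def IsCcwPolygon {n : ℕ} (P : Fin n → Pt) : Prop :=
  ∀ i j l : Fin n, i < j → j < l → ccw3 (P i) (P j) (P l)

variable {n : ℕ} {P : Fin n → Pt}

theorem IsCcwPolygon.cross_pos (h : IsCcwPolygon P) (i j l : Fin n)
    (hijl : i < j ∧ j < l ∨ j < l ∧ l < i ∨ l < i ∧ i < j := by decide) :
    0 < cross (P i) (P j) (P l) := by
  rcases hijl with ⟨hij, hjl⟩ | ⟨hjl, hli⟩ | ⟨hli, hij⟩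
  · exact ccw3_iff_cross_pos.1 (h i j l hij hjl)
  · rw [← cross_rotate]; exact ccw3_iff_cross_pos.1 (h j l i hjl hli)
  · rw [cross_rotate]; exact ccw3_iff_cross_pos.1 (h l i j hli hij)

theorem IsCcwPolygon.cross_neg (h : IsCcwPolygon P) (i j l : Fin n)
    (hilj : i < l ∧ l < j ∨ l < j ∧ j < i ∨ j < i ∧ i < l := by decide) :
    cross (P i) (P j) (P l) < 0 := by
  rw [← neg_pos, ← cross_swap]
  exact h.cross_pos i l j hilj

theorem IsCcwPolygon.segment_inter_nonempty (h : IsCcwPolygon P) {i j k l : Fin n}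
    (hij : i < j) (hjk : j < k) (hkl : k < l) :
    (segment ℝ (P i) (P k) ∩ segment ℝ (P j) (P l)).Nonempty := by
  rw [segment_symm]
  exact segment_inter_nonempty_of_cross (h.cross_neg j l k (Or.inl ⟨hjk, hkl⟩))
    (h.cross_pos j l i (Or.inr (Or.inr ⟨hij, hjk.trans hkl⟩))).le
    (h.cross_pos k i j (Or.inr (Or.inl ⟨hij, hjk⟩))).le
    (h.cross_neg k i l (Or.inr (Or.inr ⟨hij.trans hjk, hkl⟩))).le

end Polygon

section Hexagon

variable {s s' w' w t t' X a b : Pt}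

theorem hexagon_segment_w_inter_st_nonempty
    (h : IsCcwPolygon ![s, s', w', w, t, t']) (hX : X ∈ segment ℝ s t)
    (hb : b ∈ segment ℝ X t') :
    (segment ℝ w b ∩ segment ℝ s t).Nonempty := by
  refine segment_inter_nonempty_of_cross (h.cross_neg 0 4 3) ?_ ?_ ?_
  · exact cross_nonneg_of_mem_segment (cross_eq_zero_of_mem_segment hX).ge
      (h.cross_pos 0 4 5).le hb
  · rw [cross_rotate]
    exact cross_nonneg_of_mem_segment (cross_nonneg_of_mem_segment (cross_self_left s w).ge
      (h.cross_pos 0 3 4).le hX) (h.cross_pos 0 3 5).le hb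
  · rw [cross_rotate]
    exact cross_nonpos_of_mem_segment (cross_nonpos_of_mem_segment (h.cross_neg 4 3 0).le
      (cross_self_left t w).le hX) (h.cross_neg 4 3 5).le hb

theorem hexagon_segment_w'_inter_s't'_nonempty
    (h : IsCcwPolygon ![s, s', w', w, t, t']) (hX : X ∈ segment ℝ s' t')
    (ha : a ∈ segment ℝ s X) :
    (segment ℝ w' a ∩ segment ℝ s' t').Nonempty := by
  refine segment_inter_nonempty_of_cross (h.cross_neg 1 5 2) ?_ ?_ ?_
  · exact cross_nonneg_of_mem_segment (h.cross_pos 1 5 0).le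
      (cross_eq_zero_of_mem_segment hX).ge ha
  · rw [cross_rotate]
    exact cross_nonneg_of_mem_segment (h.cross_pos 1 2 0).le (cross_nonneg_of_mem_segment
      (cross_self_left s' w').ge (h.cross_pos 1 2 5).le hX) ha
  · rw [cross_rotate]
    exact cross_nonpos_of_mem_segment (h.cross_neg 5 2 0).le (cross_nonpos_of_mem_segment
      (h.cross_neg 5 2 1).le (cross_self_left t' w').le hX) ha

theorem hexagon_segment_w_inter_segment_w'_nonempty
    (h : IsCcwPolygon ![s, s', w', w, t, t']) (hX : X ∈ segment ℝ s t)
    (hX' : X ∈ segment ℝ s' t') (ha : a ∈ segment ℝ X t) (hb : b ∈ segment ℝ s' X) :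
    (segment ℝ w b ∩ segment ℝ w' a).Nonempty := by
  refine segment_inter_nonempty_of_cross ?_ ?_ ?_ ?_
  · rw [cross_rotate]
    exact cross_neg_of_mem_segment (cross_neg_of_mem_segment (h.cross_neg 3 2 0)
      (h.cross_neg 3 2 4) hX) (h.cross_neg 3 2 4) ha
  · refine cross_nonneg_of_mem_segment_of_mem_segment ?_ (cross_self_right w' X).ge
      (h.cross_pos 2 4 1).le ?_ ha hb
    · rw [cross_rotate]
      exact cross_nonneg_of_mem_segment (cross_self_left s' w').ge (h.cross_pos 1 2 5).le hX'
    · exact cross_nonneg_of_mem_segment (h.cross_pos 2 4 0).le (cross_self_right w' t).ge hX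
  · rw [cross_rotate]
    exact cross_nonneg_of_mem_segment (h.cross_pos 2 3 1).le (cross_nonneg_of_mem_segment
      (h.cross_pos 2 3 0).le (h.cross_pos 2 3 4).le hX) hb
  · rw [cross_swap, neg_nonpos]
    refine cross_nonneg_of_mem_segment_of_mem_segment ?_ (cross_self_right w X).ge
      (h.cross_pos 3 4 1).le ?_ ha hb
    · rw [cross_rotate]
      exact cross_nonneg_of_mem_segment (h.cross_pos 1 3 0).le (h.cross_pos 1 3 4).le hX
    · exact cross_nonneg_of_mem_segment (h.cross_pos 3 4 1).le (h.cross_pos 3 4 5).le hX'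

theorem hexagon_segment_inter_nonempty_trichotomy
    (h : IsCcwPolygon ![s, s', w', w, t, t']) (ha : a ∈ segment ℝ s t)
    (hb : b ∈ segment ℝ s' t') :
    (segment ℝ w b ∩ segment ℝ s t).Nonempty ∨ (segment ℝ w' a ∩ segment ℝ s' t').Nonempty ∨
      (segment ℝ w b ∩ segment ℝ w' a).Nonempty := by
  obtain ⟨X, hX, hX'⟩ := h.segment_inter_nonempty (i := 0) (j := 1) (k := 4) (l := 5)
    (by decide) (by decide) (by decide)
  rcases mem_segment_or_mem_segment hX' hb with hb | hb
  · rcases mem_segment_or_mem_segment hX ha with ha | ha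
    · exact Or.inr (Or.inl (hexagon_segment_w'_inter_s't'_nonempty h hX' ha))
    · exact Or.inr (Or.inr (hexagon_segment_w_inter_segment_w'_nonempty h hX hX' ha hb))
  · exact Or.inl (hexagon_segment_w_inter_st_nonempty h hX hb)

end Hexagon

theorem base_order_general (σ : ℝ) (s s' w' w t t' : Pt)
    (hconv : ∀ i j l : Fin 6, i < j → j < l →
      ccw3 (![s, s', w', w, t, t'] i) (![s, s', w', w, t, t'] j)
        (![s, s', w', w, t, t'] l)) :
    ¬ (Metric.infDist w' (segment ℝ s t) ≤ σ ∧
       σ < Metric.infDist w (segment ℝ s t) ∧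
       Metric.infDist w (segment ℝ s' t') ≤ σ ∧
       σ < Metric.infDist w' (segment ℝ s' t')) := by
  rintro ⟨hw'st, hwst, hws't', hw's't'⟩
  obtain ⟨a, ha, hw'a⟩ :=
    (isCompact_segment s t).exists_infDist_eq_dist ⟨s, left_mem_segment ℝ s t⟩ w'
  obtain ⟨b, hb, hwb⟩ :=
    (isCompact_segment s' t').exists_infDist_eq_dist ⟨s', left_mem_segment ℝ s' t'⟩ w
  have far {x : Pt} {S : Set Pt} {z : Pt} (hz : z ∈ S) (hσ : σ < Metric.infDist x S) :
      σ < dist x z := hσ.trans_le (Metric.infDist_le_dist_of_mem hz)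
  rcases hexagon_segment_inter_nonempty_trichotomy hconv ha hb with
    ⟨z, hzwb, hzst⟩ | ⟨z, hzw'a, hzs't'⟩ | ⟨z, hzwb, hzw'a⟩
  · linarith [far hzst hwst, dist_le_dist_of_mem_segment hzwb]
  · linarith [far hzs't' hw's't', dist_le_dist_of_mem_segment hzw'a]
  · linarith [far ha hwst, far hb hw's't',
      dist_add_dist_le_of_mem_segment_of_mem_segment hzwb hzw'a]

theorem base_order (σ : ℝ) (hσ : 0 < σ) (s s' w' w t t' : Pt)
    (hconv : ∀ i j l : Fin 6, i < j → j < l →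
      ccw3 (![s, s', w', w, t, t'] i) (![s, s', w', w, t, t'] j)
        (![s, s', w', w, t, t'] l)) :
    ¬ (Metric.infDist w' (segment ℝ s t) ≤ σ ∧
       σ < Metric.infDist w (segment ℝ s t) ∧
       Metric.infDist w (segment ℝ s' t') ≤ σ ∧
       σ < Metric.infDist w' (segment ℝ s' t')) :=
  base_order_general σ s s' w' w t t' hconv
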